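/- arXiv:1106.1312 — 3 statements merged into one kernel-verified Lean document; each statement's English description precedes it below -/
import Mathlib

section
/- Let k be a field, let A be an integral domain that is a finitely generated k-algebra, let f ∈ A be nonzero, and let B = A_f be the localization of A away from f, with canonical injection ι : A → B. Let δ : B → B be a locally nilpotent k-derivation such that δ(ι(f)) = 0. Then there exist N ∈ ℕ and a k-derivation D : A → A such that ι(D(a)) = ι(f)^N · δ(ι(a)) for all a ∈ A, and D is locally nilpotent. -/
/-!
Since `A` is finitely generated over `k`, one power `f ^ N` clears the denominators of `δ` on a
finite set of generators, hence, by the Leibniz rule, on all of `A`: the derivation `f ^ N • δ`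
of `B` maps `A` into `A`. As `δ` kills `f`, `(f ^ N • δ) ^ n = f ^ (N * n) • δ ^ n`, so local
nilpotency passes from `δ` to the restriction.
-/

namespace Derivation

section CodRestrict

variable {R A M N : Type*} [CommSemiring R] [CommSemiring A] [Algebra R A]
  [AddCommMonoid M] [Module A M] [Module R M] [IsScalarTower R A M]
  [AddCommMonoid N] [Module A N] [Module R N] [IsScalarTower R A N]

noncomputable def codRestrictOfInjective (D : Derivation R A M) (i : N →ₗ[A] M)
    (hi : Function.Injective i) (hD : ∀ a, D a ∈ LinearMap.range i) : Derivation R A N where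
  toLinearMap := LinearMap.codRestrictOfInjective (D : A →ₗ[R] M) (i.restrictScalars R) hi hD
  map_one_eq_zero' := hi <| by
    simpa using LinearMap.codRestrictOfInjective_comp_apply _ (i.restrictScalars R) hi hD 1
  leibniz' a b := hi <| by
    have key := LinearMap.codRestrictOfInjective_comp_apply _ (i.restrictScalars R) hi hD
    simp only [LinearMap.coe_restrictScalars, coeFn_coe] at key
    simp [key]

@[simp]
lemma codRestrictOfInjective_comp_apply (D : Derivation R A M) (i : N →ₗ[A] M)
    (hi : Function.Injective i) (hD : ∀ a, D a ∈ LinearMap.range i) (a : A) :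
    i (D.codRestrictOfInjective i hi hD a) = D a :=
  LinearMap.codRestrictOfInjective_comp_apply _ (i.restrictScalars R) hi hD a

end CodRestrict

lemma map_mem_of_adjoin_eq_top {R A M : Type*} [CommSemiring R] [CommSemiring A] [Algebra R A]
    [AddCommMonoid M] [Module A M] [Module R M] (D : Derivation R A M) (P : Submodule A M)
    {s : Set A} (hs : Algebra.adjoin R s = ⊤) (h : ∀ x ∈ s, D x ∈ P) (a : A) : D a ∈ P := by
  have ha : a ∈ Algebra.adjoin R s := hs ▸ Algebra.mem_top
  induction ha using Algebra.adjoin_induction with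
  | mem x hx => exact h x hx
  | algebraMap r => simp
  | add x y _ _ hx hy => simpa using P.add_mem hx hy
  | mul x y _ _ hx hy => simpa using P.add_mem (P.smul_mem x hy) (P.smul_mem y hx)

lemma exists_pow_smul_map_mem_of_finiteType {R A M : Type*} [CommSemiring R] [CommSemiring A]
    [Algebra R A] [Algebra.FiniteType R A] [AddCommMonoid M] [Module A M] [Module R M]
    [IsScalarTower R A M] (D : Derivation R A M) (P : Submodule A M) (f : A)
    (h : ∀ a, ∃ n : ℕ, f ^ n • D a ∈ P) : ∃ N : ℕ, ∀ a, (f ^ N • D) a ∈ P := by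
  obtain ⟨s, hs⟩ := Algebra.FiniteType.out (R := R) (A := A)
  choose n hn using h
  refine ⟨s.sup n, map_mem_of_adjoin_eq_top _ P hs fun x hx => ?_⟩
  rw [smul_apply, ← Nat.sub_add_cancel (Finset.le_sup hx), pow_add, mul_smul]
  exact P.smul_mem _ (hn x)

lemma map_pow_mul_of_map_eq_zero {R B : Type*} [CommSemiring R] [CommRing B] [Algebra R B]
    (δ : Derivation R B B) {c : B} (hc : δ c = 0) (n : ℕ) (b : B) :
    δ (c ^ n * b) = c ^ n * δ b := by
  simp [leibniz, leibniz_pow, hc]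

lemma iterate_smul_apply_of_map_eq_zero {R B : Type*} [CommSemiring R] [CommRing B] [Algebra R B]
    (δ : Derivation R B B) {c : B} (hc : δ c = 0) (n : ℕ) (b : B) :
    (⇑(c • δ))^[n] b = c ^ n * (⇑δ)^[n] b := by
  induction n with
  | zero => simp
  | succ n ih =>
    rw [Function.iterate_succ_apply', ih, smul_apply, smul_eq_mul,
      map_pow_mul_of_map_eq_zero δ hc, Function.iterate_succ_apply', pow_succ', mul_assoc]

end Derivation

lemma IsLocalization.Away.exists_pow_smul_mem_range {A B : Type*} [CommSemiring A] [CommSemiring B]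
    [Algebra A B] (f : A) [IsLocalization.Away f B] (b : B) :
    ∃ n : ℕ, f ^ n • b ∈ LinearMap.range (Algebra.linearMap A B) := by
  obtain ⟨n, a, h⟩ := IsLocalization.Away.surj f b
  exact ⟨n, a, by rw [Algebra.linearMap_apply, ← h, Algebra.smul_def, map_pow, mul_comm]⟩

/-- Let `k` be a field, `A` an integral domain which is a finitely generated `k`-algebra,
`f ∈ A` nonzero, and let `B` be the localization of `A` away from `f`, with canonical
injection `ι = algebraMap A B`.  Let `δ : B → B` be a locally nilpotent `k`-derivation with
`δ (ι f) = 0`.  Then there exist `N : ℕ` and a `k`-derivation `D : A → A` such that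
`ι (D a) = (ι f) ^ N * δ (ι a)` for all `a ∈ A`, and `D` is locally nilpotent. -/
theorem lnd_descends_to_affine_cone {k A B : Type*} [Field k]
    [CommRing A] [IsDomain A] [Algebra k A] [Algebra.FiniteType k A]
    [CommRing B] [Algebra k B] [Algebra A B] [IsScalarTower k A B]
    (f : A) (hf : f ≠ 0) [IsLocalization.Away f B]
    (δ : Derivation k B B)
    (hδf : δ (algebraMap A B f) = 0)
    (hln : ∀ b : B, ∃ n : ℕ, (⇑δ)^[n] b = 0) :
    ∃ (N : ℕ) (D : Derivation k A A),
      (∀ a : A, algebraMap A B (D a) = (algebraMap A B f) ^ N * δ (algebraMap A B a)) ∧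
      (∀ a : A, ∃ n : ℕ, (⇑D)^[n] a = 0) := by
  have hι : Function.Injective (algebraMap A B) :=
    IsLocalization.injective B (powers_le_nonZeroDivisors_of_noZeroDivisors hf)
  obtain ⟨N, hN⟩ := (δ.compAlgebraMap A).exists_pow_smul_map_mem_of_finiteType _ f
    fun a => IsLocalization.Away.exists_pow_smul_mem_range f _
  set D := (f ^ N • δ.compAlgebraMap A).codRestrictOfInjective _ hι hN
  have hD (a : A) : algebraMap A B (D a) = (algebraMap A B f) ^ N * δ (algebraMap A B a) := by
    simpa [Algebra.smul_def] using
      (f ^ N • δ.compAlgebraMap A).codRestrictOfInjective_comp_apply _ hι hN a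
  refine ⟨N, D, hD, fun a => ?_⟩
  have hsemi : Function.Semiconj (algebraMap A B) D (⇑((algebraMap A B f) ^ N • δ)) := hD
  have hδfN : δ (algebraMap A B f ^ N) = 0 := by simp [Derivation.leibniz_pow, hδf]
  obtain ⟨n, hn⟩ := hln (algebraMap A B a)
  refine ⟨n, hι ?_⟩
  rw [hsemi.iterate_right n a, δ.iterate_smul_apply_of_map_eq_zero hδfN, hn, mul_zero, map_zero]
end

section
/- Let n ≥ 2, let α₁, …, α_n be positive integers and δ₁, …, δ_n be nonnegative integers such that δ₁ + ⋯ + δ_n = 2 and δ₁ ≥ 1, and suppose the following linear relations hold: −2α₁ + α₂ = −δ₁; α_{i−1} − 2α_i + α_{i+1} = −δ_i for all 1 < i < n; and α_{n−1} − 2α_n = −δ_n. Then α_i = 1 for all i, δ₁ = δ_n = 1, and δ_i = 0 for all 1 < i < n. -/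
/-!
Extend `α` by zero to `β` on `0, …, n + 1`. The system then says that the second differences
of `β` are `-δ i`, so `β` is concave, and summing them telescopes to
`-2 = -∑ δ i = (β (n + 1) - β n) - (β 1 - β 0) = -(α n + α 1)`; positivity forces
`α 1 = α n = 1`. Since `δ 1 ≥ 1`, the slope of `β` after index `1` is already `≤ 0`, and by
concavity it stays so: `β` is nonincreasing from `β 1 = 1`, hence every `α i` equals `1`.
The values of `δ` are then read off the system.
-/

def secondDiff (f : ℕ → ℤ) (i : ℕ) : ℤ := f (i - 1) - 2 * f i + f (i + 1)

theorem sum_Icc_secondDiff (f : ℕ → ℤ) (n : ℕ) :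
    ∑ i ∈ Finset.Icc 1 n, secondDiff f i = (f (n + 1) - f n) - (f 1 - f 0) := by
  induction n with
  | zero => simp
  | succ n ih =>
    rw [Finset.sum_Icc_succ_top (by omega), ih, secondDiff, Nat.add_sub_cancel]
    ring

section Concave

variable {f : ℕ → ℤ} {a b : ℕ}

theorem sub_le_sub_of_secondDiff_nonpos (h : ∀ i, a < i → i ≤ b → secondDiff f i ≤ 0)
    {i : ℕ} (hai : a ≤ i) (hib : i ≤ b) : f (i + 1) - f i ≤ f (a + 1) - f a := by
  induction i, hai using Nat.le_induction with
  | base => exact le_rfl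
  | succ i hai ih =>
    have hconc := h (i + 1) (by omega) hib
    rw [secondDiff, Nat.add_sub_cancel] at hconc
    linarith [ih (by omega)]

theorem le_of_secondDiff_nonpos (h : ∀ i, a < i → i ≤ b → secondDiff f i ≤ 0)
    (hstart : f (a + 1) ≤ f a) {i : ℕ} (hai : a ≤ i) (hib : i ≤ b + 1) : f i ≤ f a := by
  induction i, hai using Nat.le_induction with
  | base => exact le_rfl
  | succ i hai ih =>
    linarith [ih (by omega), sub_le_sub_of_secondDiff_nonpos h hai (by omega)]

end Concave

theorem secondDiff_indicator_Icc {n : ℕ} (hn : 2 ≤ n) {α δ : ℕ → ℤ}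
    (hfirst : -2 * α 1 + α 2 = -δ 1)
    (hmid : ∀ i : ℕ, 1 < i → i < n → α (i - 1) - 2 * α i + α (i + 1) = -δ i)
    (hlast : α (n - 1) - 2 * α n = -δ n) {i : ℕ} (h1i : 1 ≤ i) (hin : i ≤ n) :
    secondDiff ((Set.Icc 1 n).indicator α) i = -δ i := by
  have hmem : ∀ j, 1 ≤ j → j ≤ n → (Set.Icc 1 n).indicator α j = α j := fun j h1 h2 =>
    Set.indicator_of_mem (Set.mem_Icc.2 ⟨h1, h2⟩) α
  have hout : ∀ j, j = 0 ∨ n < j → (Set.Icc 1 n).indicator α j = 0 := fun j hj =>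
    Set.indicator_of_notMem (fun hj' => by simp only [Set.mem_Icc] at hj'; omega) α
  rw [secondDiff]
  rcases Nat.lt_or_ge 1 i with h1i' | hi1
  · rcases Nat.lt_or_ge i n with hin' | hni
    · rw [hmem (i - 1) (by omega) (by omega), hmem i h1i hin, hmem (i + 1) (by omega) hin']
      exact hmid i h1i' hin'
    · obtain rfl : i = n := by omega
      rw [hmem (i - 1) (by omega) (by omega), hmem i h1i hin, hout (i + 1) (by omega)]
      linarith
  · obtain rfl : i = 1 := by omega
    rw [hout 0 (by omega), hmem 1 le_rfl (by omega), hmem 2 (by omega) hn]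
    linarith

/-- Let `n ≥ 2`, let `α 1, …, α n` be positive integers and `δ 1, …, δ n` nonnegative
integers with `δ 1 + ⋯ + δ n = 2` and `δ 1 ≥ 1`, satisfying the tridiagonal system
`-2 α 1 + α 2 = -δ 1`, `α (i-1) - 2 α i + α (i+1) = -δ i` for `1 < i < n`, and
`α (n-1) - 2 α n = -δ n`.  Then all `α i = 1`, `δ 1 = δ n = 1`, and `δ i = 0` for
`1 < i < n`. -/
theorem fundamental_cycle_coefficients (n : ℕ) (hn : 2 ≤ n) (α δ : ℕ → ℤ)
    (hα : ∀ i : ℕ, 1 ≤ i → i ≤ n → 0 < α i)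
    (hδ : ∀ i : ℕ, 1 ≤ i → i ≤ n → 0 ≤ δ i)
    (hsum : ∑ i ∈ Finset.Icc 1 n, δ i = 2)
    (hδ1 : 1 ≤ δ 1)
    (hfirst : -2 * α 1 + α 2 = -δ 1)
    (hmid : ∀ i : ℕ, 1 < i → i < n → α (i - 1) - 2 * α i + α (i + 1) = -δ i)
    (hlast : α (n - 1) - 2 * α n = -δ n) :
    (∀ i : ℕ, 1 ≤ i → i ≤ n → α i = 1) ∧ δ 1 = 1 ∧ δ n = 1 ∧
      (∀ i : ℕ, 1 < i → i < n → δ i = 0) := by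
  set β := (Set.Icc 1 n).indicator α
  have hβ : ∀ i, 1 ≤ i → i ≤ n → β i = α i := fun i h1 h2 =>
    Set.indicator_of_mem (Set.mem_Icc.2 ⟨h1, h2⟩) α
  have hsystem : ∀ i, 1 ≤ i → i ≤ n → secondDiff β i = -δ i := fun i =>
    secondDiff_indicator_Icc hn hfirst hmid hlast
  have hends : α 1 + α n = 2 := by
    have htel := sum_Icc_secondDiff β n
    rw [Finset.sum_congr rfl fun i hi => hsystem i (Finset.mem_Icc.1 hi).1 (Finset.mem_Icc.1 hi).2,
      Finset.sum_neg_distrib, hsum, hβ 1 le_rfl (by omega), hβ n (by omega) le_rfl,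
      show β 0 = 0 from Set.indicator_of_notMem (by simp) α,
      show β (n + 1) = 0 from Set.indicator_of_notMem (by simp) α] at htel
    linarith
  have hα1 : α 1 = 1 := by linarith [hα 1 le_rfl (by omega), hα n (by omega) le_rfl]
  have hconcave : ∀ j, 1 < j → j ≤ n → secondDiff β j ≤ 0 := fun j h1 h2 => by
    linarith [hsystem j (by omega) h2, hδ j (by omega) h2]
  have hstart : β 2 ≤ β 1 := by
    rw [hβ 1 le_rfl (by omega), hβ 2 (by omega) hn]
    linarith
  have hone : ∀ i, 1 ≤ i → i ≤ n → α i = 1 := by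
    intro i h1 h2
    have hle := le_of_secondDiff_nonpos hconcave hstart h1 (by omega : i ≤ n + 1)
    rw [hβ i h1 h2, hβ 1 le_rfl (by omega)] at hle
    linarith [hα i h1 h2]
  refine ⟨hone, ?_, ?_, fun i h1 h2 => ?_⟩
  · linarith [hone 2 (by omega) hn]
  · linarith [hone (n - 1) (by omega) (by omega), hone n (by omega) le_rfl]
  · linarith [hmid i h1 h2, hone (i - 1) (by omega) (by omega), hone i (by omega) (by omega),
      hone (i + 1) (by omega) (by omega)]
end

section
/- Let q = x₁x₃ + x₂x₄ ∈ ℂ[x₁, x₂, x₃, x₄], and let q' = x₁·u + x₂·v where u, v ∈ ℂ[x₁, x₂, x₃, x₄] are linear forms and u has zero coefficient at x₃. Suppose that for every point (0, 0, s, t) ∈ ℂ⁴ the 2 × 4 matrix whose rows are the gradients of q and q' evaluated at (0, 0, s, t) has rank at most 1. Then the coefficient of x₄ in u and the coefficients of x₃ and x₄ in v all vanish; consequently q' is a ℂ-linear combination of x₁², x₁x₂ and x₂², i.e. q' lies in the square of the ideal (x₁, x₂). -/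
/-!
Along `Λ = {x₁ = x₂ = 0}` the gradients of `q` and `q'` at `(0, 0, s, t)` are `(s, t, 0, 0)` and
`(u, v, 0, 0)` evaluated there, so the rank condition says that the binary quadratic form
`s · v(0, 0, s, t) - t · u(0, 0, s, t)` vanishes identically. Its coefficients are the coefficient
of `x₃` in `v`, the difference of the coefficients of `x₄` in `v` and of `x₃` in `u`, and minus the
coefficient of `x₄` in `u`. Hence `u` and `v` lie in `(x₁, x₂)`, and `q' = x₁ u + x₂ v` in its
square.
-/

open MvPolynomial

theorem Matrix.mul_eq_mul_of_rank_le_one {n R : Type*} [Fintype n] [CommRing R] [IsDomain R]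
    {M : Matrix (Fin 2) n R} (hM : M.rank ≤ 1) (i j : n) :
    M 0 i * M 1 j = M 0 j * M 1 i := by
  by_contra h
  have hdet : (M.submatrix id ![i, j]).det ≠ 0 := by
    rw [Matrix.det_fin_two]
    simpa [sub_eq_zero] using h
  have := (Matrix.rank_of_det_ne_zero hdet).symm.trans_le
    ((M.rank_submatrix_le id ![i, j]).trans hM)
  simp at this

theorem eq_zero_of_forall_quadratic_eq_zero {R : Type*} [CommRing R] {a b c : R}
    (h : ∀ s t : R, a * s ^ 2 + b * s * t + c * t ^ 2 = 0) : a = 0 ∧ b = 0 ∧ c = 0 := by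
  have ha := h 1 0
  have hc := h 0 1
  have hb := h 1 1
  simp at ha hc
  simp_all

namespace MvPolynomial.IsHomogeneous

variable {σ R : Type*} [CommSemiring R] {p : MvPolynomial σ R}

theorem exists_single_eq_of_mem_support (hp : p.IsHomogeneous 1) {d : σ →₀ ℕ}
    (hd : d ∈ p.support) : ∃ i, Finsupp.single i 1 = d :=
  Finsupp.range_single_one.ge <| by
    show d.degree = 1
    rw [Finsupp.degree_eq_weight_one]
    exact hp (mem_support_iff.mp hd)

theorem eq_sum_C_mul_X [Fintype σ] (hp : p.IsHomogeneous 1) :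
    p = ∑ i, C (coeff (Finsupp.single i 1) p) * X i := by
  classical
  ext d
  simp only [coeff_sum, coeff_C_mul, coeff_X, mul_ite, mul_one, mul_zero]
  by_cases hd : d ∈ p.support
  · obtain ⟨i, rfl⟩ := hp.exists_single_eq_of_mem_support hd
    simp [Finsupp.single_left_inj one_ne_zero]
  · rw [notMem_support_iff.mp hd]
    refine (Finset.sum_eq_zero fun i _ => ?_).symm
    split_ifs with hi
    · exact hi ▸ notMem_support_iff.mp hd
    · rfl

theorem eval_eq_sum [Fintype σ] (hp : p.IsHomogeneous 1) (x : σ → R) :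
    eval x p = ∑ i, coeff (Finsupp.single i 1) p * x i := by
  conv_lhs => rw [hp.eq_sum_C_mul_X]
  simp

theorem mem_ideal_span_X_image (hp : p.IsHomogeneous 1) {s : Set σ}
    (hs : ∀ i ∉ s, coeff (Finsupp.single i 1) p = 0) : p ∈ Ideal.span (X '' s) := by
  refine MvPolynomial.mem_ideal_span_X_image.mpr fun d hd => ?_
  obtain ⟨i, rfl⟩ := hp.exists_single_eq_of_mem_support hd
  refine ⟨i, ?_, by simp⟩
  by_contra hi
  exact mem_support_iff.mp hd (hs i hi)

end MvPolynomial.IsHomogeneous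

/-- Let `q = x₁x₃ + x₂x₄` and `q' = x₁·u + x₂·v`, where `u, v` are linear forms and `u`
does not involve `x₃`.  If at every point `(0,0,s,t)` the `2 × 4` matrix whose rows are the
gradients of `q` and `q'` has rank at most `1`, then the coefficient of `x₄` in `u` and the
coefficients of `x₃`, `x₄` in `v` vanish; consequently `q'` lies in the square of the ideal
`(x₁, x₂)`, i.e. `q'` is a cone with vertex the line `{x₁ = x₂ = 0}`. -/
theorem second_quadric_is_cone (u v q q' : MvPolynomial (Fin 4) ℂ)
    (hu : u.IsHomogeneous 1) (hv : v.IsHomogeneous 1)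
    (hu3 : coeff (Finsupp.single 2 1) u = 0)
    (hq : q = X 0 * X 2 + X 1 * X 3)
    (hq' : q' = X 0 * u + X 1 * v)
    (hrank : ∀ s t : ℂ,
      Matrix.rank (Matrix.of
        ![fun j : Fin 4 => eval ![0, 0, s, t] (pderiv j q),
          fun j : Fin 4 => eval ![0, 0, s, t] (pderiv j q')]) ≤ 1) :
    coeff (Finsupp.single 3 1) u = 0 ∧
    coeff (Finsupp.single 2 1) v = 0 ∧
    coeff (Finsupp.single 3 1) v = 0 ∧
    q' ∈ (Ideal.span {X 0, X 1} : Ideal (MvPolynomial (Fin 4) ℂ)) ^ 2 := by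
  have minor : ∀ s t : ℂ, s * eval ![0, 0, s, t] v = t * eval ![0, 0, s, t] u := fun s t => by
    simpa [hq, hq', pderiv_mul] using Matrix.mul_eq_mul_of_rank_le_one (hrank s t) 0 1
  obtain ⟨hv3, hv4, hu4⟩ := eq_zero_of_forall_quadratic_eq_zero
    (a := coeff (Finsupp.single 2 1) v)
    (b := coeff (Finsupp.single 3 1) v - coeff (Finsupp.single 2 1) u)
    (c := -coeff (Finsupp.single 3 1) u) fun s t => by
      have := minor s t
      simp only [hu.eval_eq_sum, hv.eval_eq_sum, Fin.sum_univ_four, Matrix.cons_val] at this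
      linear_combination this
  rw [hu3, sub_zero] at hv4
  rw [neg_eq_zero] at hu4
  have mem_span : ∀ p : MvPolynomial (Fin 4) ℂ, p.IsHomogeneous 1 →
      coeff (Finsupp.single 2 1) p = 0 → coeff (Finsupp.single 3 1) p = 0 →
      p ∈ Ideal.span (X '' {0, 1}) := fun p hp h2 h3 =>
    hp.mem_ideal_span_X_image fun i hi => by fin_cases i <;> simp_all
  refine ⟨hu4, hv3, hv4, ?_⟩
  rw [hq', ← Set.image_pair, pow_two]
  exact Ideal.add_mem _
    (Ideal.mul_mem_mul (Ideal.subset_span ⟨0, by simp⟩) (mem_span u hu hu3 hu4))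
    (Ideal.mul_mem_mul (Ideal.subset_span ⟨1, by simp⟩) (mem_span v hv hv3 hv4))
end
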